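/- arXiv:nlin/0503050 — 5 statements merged into one kernel-verified Lean document; each statement's English description precedes it below -/
import Mathlib

section
/- For any (n+1)×(n+1) matrix A over a commutative ring (or field), the Jacobi/Desnanot identity holds: det(A restricted to rows 1..n, columns 1..n) · det(A restricted to rows 2..n+1, columns 2..n+1) − det(A restricted to rows 2..n+1, columns 1..n) · det(A restricted to rows 1..n, columns 2..n+1) = det(A) · det(A restricted to rows 2..n, columns 2..n). -/
/-!
Let `B = adj A` and let `P` be the identity matrix with its first and last columns replaced by
those of `B`. Then `A * P` is `A` with its first and last columns replaced by `det A` times the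
corresponding unit vectors, so expanding along these two columns gives
`det A * det P = (det A)^2 * A^{2..n+1}_{2..n+1}`. With `S` the `(n+2) × 2` matrix selecting the
first and last columns, `P = 1 + (B * S - S) * Sᵀ`, so `det P = det (Sᵀ * B * S)` by
`det (1 + U * V) = det (1 + V * U)`: the `2 × 2` minor of `B` on the first and last rows and
columns, which the cofactor formula turns into the left-hand side. Cancelling `det A` is
legitimate for the generic matrix over `ℤ[X i j]`, and the identity then specialises to any `A`.
-/

namespace Matrix

variable {R : Type*} [CommRing R]

section
variable {m n : Type*} [Fintype m] [DecidableEq m] [Fintype n] [DecidableEq n]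

theorem det_one_add_mul_sub_mul_transpose {S : Matrix n m R} (hS : Sᵀ * S = 1)
    (B : Matrix n n R) : det (1 + (B * S - S) * Sᵀ) = det (Sᵀ * B * S) := by
  rw [det_one_add_mul_comm, Matrix.mul_sub, hS, Matrix.mul_assoc, add_sub_cancel]

theorem det_mul_det_transpose_mul_adjugate_mul {S : Matrix n m R} (hS : Sᵀ * S = 1)
    (A : Matrix n n R) :
    A.det * det (Sᵀ * adjugate A * S) = det (A + (A.det • S - A * S) * Sᵀ) := by
  rw [← det_one_add_mul_sub_mul_transpose hS, ← det_mul, Matrix.mul_add, Matrix.mul_one,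
    ← Matrix.mul_assoc, Matrix.mul_sub, ← Matrix.mul_assoc, mul_adjugate, smul_mul,
    Matrix.one_mul]

theorem add_sub_mul_mul_transpose_submatrix_one_apply_self {e : m → n}
    (he : Function.Injective e) (A : Matrix n n R) (V : Matrix n m R) (i : n) (a : m) :
    (A + (V - A * (1 : Matrix n n R).submatrix id e) * ((1 : Matrix n n R).submatrix id e)ᵀ)
      i (e a) = V i a := by
  simp [mul_apply, one_apply, he.eq_iff, Finset.sum_ite_eq']

end

theorem add_sub_mul_mul_transpose_submatrix_one_apply_of_notMem {m n : Type*} [Fintype m]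
    [Fintype n] [DecidableEq n] {e : m → n} {j : n} (hj : j ∉ Set.range e)
    (A : Matrix n n R) (V : Matrix n m R) (i : n) :
    (A + (V - A * (1 : Matrix n n R).submatrix id e) * ((1 : Matrix n n R).submatrix id e)ᵀ)
      i j = A i j := by
  simp_all [mul_apply, one_apply]

theorem transpose_submatrix_one_mul_mul_submatrix_one {m n : Type*} [Fintype n] [DecidableEq n]
    (B : Matrix n n R) (e : m → n) :
    ((1 : Matrix n n R).submatrix id e)ᵀ * B * (1 : Matrix n n R).submatrix id e =
      B.submatrix e e := by
  ext i j
  simp [mul_apply, one_apply]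

theorem det_eq_mul_det_submatrix_of_col_eq_single {k : ℕ}
    (M : Matrix (Fin (k + 1)) (Fin (k + 1)) R) (j : Fin (k + 1)) (c : R)
    (hM : Mᵀ j = Pi.single j c) :
    M.det = c * (M.submatrix j.succAbove j.succAbove).det := by
  have hMj (i) : M i j = (Pi.single j c : Fin (k + 1) → R) i := congrFun hM i
  rw [det_succ_column M j, Finset.sum_eq_single j (fun i _ hi => by simp [hMj, hi]) (by simp),
    hMj, Pi.single_eq_same, ← two_mul, pow_mul, neg_one_sq, one_pow, one_mul]

variable {n : ℕ}

theorem injective_zero_last : Function.Injective ![(0 : Fin (n + 2)), Fin.last (n + 1)] := by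
  intro i j h
  fin_cases i <;> fin_cases j <;> simp_all [Fin.ext_iff]

theorem det_mul_det_adjugate_submatrix_zero_last (A : Matrix (Fin (n + 2)) (Fin (n + 2)) R) :
    A.det * ((adjugate A).submatrix ![0, Fin.last (n + 1)] ![0, Fin.last (n + 1)]).det =
      A.det * (A.det * (A.submatrix (fun i : Fin n => i.succ.castSucc)
        (fun j : Fin n => j.succ.castSucc)).det) := by
  set e : Fin 2 → Fin (n + 2) := ![0, Fin.last (n + 1)]
  set S := (1 : Matrix (Fin (n + 2)) (Fin (n + 2)) R).submatrix id e
  have hS : Sᵀ * S = 1 := by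
    have := transpose_submatrix_one_mul_mul_submatrix_one (1 : Matrix (Fin (n + 2)) _ R) e
    rwa [Matrix.mul_one, submatrix_one _ injective_zero_last] at this
  set C := A + (A.det • S - A * S) * Sᵀ
  have hC_self (i : Fin (n + 2)) (a : Fin 2) : C i (e a) = A.det * (1 : Matrix _ _ R) i (e a) :=
    add_sub_mul_mul_transpose_submatrix_one_apply_self injective_zero_last A (A.det • S) i a
  have hC_notMem (i : Fin (n + 2)) {j : Fin (n + 2)} (hj : j ∉ Set.range e) : C i j = A i j :=
    add_sub_mul_mul_transpose_submatrix_one_apply_of_notMem hj A (A.det • S) i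
  have col_zero : Cᵀ 0 = Pi.single 0 A.det := by
    ext i
    exact (hC_self i 0).trans (by by_cases hi : i = 0 <;> simp [hi, e, one_apply])
  have col_last :
      (C.submatrix Fin.succ Fin.succ)ᵀ (Fin.last n) = Pi.single (Fin.last n) A.det := by
    ext i
    simpa [e, one_apply, Pi.single_apply, Fin.succ_last] using hC_self i.succ 1
  have inner : (C.submatrix Fin.succ Fin.succ).submatrix Fin.castSucc Fin.castSucc =
      A.submatrix (fun i : Fin n => i.succ.castSucc) (fun j : Fin n => j.succ.castSucc) := by
    ext i j
    have hj : j.succ.castSucc ∉ Set.range e := by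
      rintro ⟨a, ha⟩
      fin_cases a <;> simp [e, Fin.ext_iff] at ha
      omega
    simp only [submatrix_apply, Fin.succ_castSucc]
    exact hC_notMem _ hj
  rw [← transpose_submatrix_one_mul_mul_submatrix_one, det_mul_det_transpose_mul_adjugate_mul hS,
    det_eq_mul_det_submatrix_of_col_eq_single _ 0 _ col_zero, Fin.succAbove_zero,
    det_eq_mul_det_submatrix_of_col_eq_single _ (Fin.last n) _ col_last, Fin.succAbove_last,
    inner]

theorem det_adjugate_submatrix_zero_last (A : Matrix (Fin (n + 2)) (Fin (n + 2)) R) :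
    ((adjugate A).submatrix ![0, Fin.last (n + 1)] ![0, Fin.last (n + 1)]).det =
      A.det * (A.submatrix (fun i : Fin n => i.succ.castSucc)
        (fun j : Fin n => j.succ.castSucc)).det := by
  let X := mvPolynomialX (Fin (n + 2)) (Fin (n + 2)) ℤ
  let f : MvPolynomial (Fin (n + 2) × Fin (n + 2)) ℤ →+* R :=
    MvPolynomial.eval₂Hom (Int.castRingHom R) fun p => A p.1 p.2
  have hA : f.mapMatrix X = A := mvPolynomialX_map_eval₂ _ A
  have hX := mul_left_cancel₀ (det_mvPolynomialX_ne_zero _ ℤ)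
    (det_mul_det_adjugate_submatrix_zero_last X)
  have hsub {k : ℕ} (r c : Fin k → Fin (n + 2)) (M : Matrix (Fin (n + 2)) (Fin (n + 2)) _) :
      (f.mapMatrix M).submatrix r c = f.mapMatrix (M.submatrix r c) := rfl
  rw [← hA, ← RingHom.map_adjugate, hsub, hsub, ← RingHom.map_det, ← RingHom.map_det,
    ← RingHom.map_det, ← map_mul, hX]

theorem det_adjugate_submatrix_zero_last_eq_minors (A : Matrix (Fin (n + 2)) (Fin (n + 2)) R) :
    ((adjugate A).submatrix ![0, Fin.last (n + 1)] ![0, Fin.last (n + 1)]).det =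
      (A.submatrix Fin.castSucc Fin.castSucc).det * (A.submatrix Fin.succ Fin.succ).det -
        (A.submatrix Fin.succ Fin.castSucc).det * (A.submatrix Fin.castSucc Fin.succ).det := by
  have hsq : (-1 : R) ^ (n + 1 + (n + 1)) = 1 := Even.neg_one_pow ⟨n + 1, rfl⟩
  rw [det_fin_two]
  simp only [submatrix_apply, cons_val_zero, cons_val_one, adjugate_fin_succ_eq_det_submatrix,
    Fin.succAbove_zero, Fin.succAbove_last, Fin.val_zero, Fin.val_last, add_zero, zero_add,
    pow_zero, one_mul, hsq]
  linear_combination (-(A.submatrix Fin.castSucc Fin.succ).det *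
    (A.submatrix Fin.succ Fin.castSucc).det) * hsq

end Matrix

/-- Jacobi/Desnanot identity for an (n+2)×(n+2) matrix over a commutative ring:
`A^{1..n+1}_{1..n+1} · A^{2..n+2}_{2..n+2} − A^{2..n+2}_{1..n+1} · A^{1..n+1}_{2..n+2}
  = det A · A^{2..n+1}_{2..n+1}`. -/
theorem jacobi_identity {R : Type*} [CommRing R] (n : ℕ)
    (A : Matrix (Fin (n + 2)) (Fin (n + 2)) R) :
    (A.submatrix Fin.castSucc Fin.castSucc).det * (A.submatrix Fin.succ Fin.succ).det -
      (A.submatrix Fin.succ Fin.castSucc).det * (A.submatrix Fin.castSucc Fin.succ).det =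
    A.det *
      (A.submatrix (fun i : Fin n => i.succ.castSucc) (fun j : Fin n => j.succ.castSucc)).det := by
  rw [← Matrix.det_adjugate_submatrix_zero_last_eq_minors,
    Matrix.det_adjugate_submatrix_zero_last]
end

section
/- Let μ : ℤ → F be a function into a field F, and define the shifted Toeplitz determinant Δ_n^ℓ = det of the n×n matrix whose (i,j) entry is μ(ℓ + j − i) (indices i, j from 1 to n), with Δ_0^ℓ = 1, and define the polynomial ℘_n^ℓ(x) = det of the (n+1)×(n+1) matrix whose first n rows have (i,j) entry μ(ℓ + j − i + 1) (i from 1 to n, j from 0 to n) and whose last row is (1, x, x², …, xⁿ). Then the identity x·Δ_n^ℓ·℘_{n−1}^ℓ(x) − Δ_n^{ℓ+1}·℘_{n−1}^{ℓ−1}(x) = Δ_{n−1}^ℓ·℘_n^ℓ(x) holds in the polynomial ring F[x]. -/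
section DesnanotJacobi

open Matrix

variable {R : Type*} [CommRing R] {m : ℕ}

private lemma updateColumn_comm' (M : Matrix (Fin m) (Fin m) R) {c c' : Fin m} (h : c ≠ c')
    (v w : Fin m → R) :
    (M.updateCol c v).updateCol c' w = (M.updateCol c' w).updateCol c v := by
  ext i j
  simp only [Matrix.updateCol_apply]
  split_ifs with h1 h2 <;> simp_all

private lemma mul_updateColumn (A B : Matrix (Fin m) (Fin m) R) (c : Fin m) (v : Fin m → R) :
    A * (B.updateCol c v) = (A * B).updateCol c (A.mulVec v) := by
  ext i j
  rcases eq_or_ne j c with rfl | h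
  · simp [Matrix.mul_apply, Matrix.mulVec, dotProduct]
  · simp [Matrix.mul_apply, h, Matrix.updateCol_ne h]

private lemma det_updateRow_expand (M : Matrix (Fin m) (Fin m) R) (r : Fin m) (v : Fin m → R) :
    (M.updateRow r v).det = ∑ k, v k * (M.updateRow r (Pi.single k 1)).det := by
  have hv : v = ∑ k, v k • (Pi.single k 1 : Fin m → R) := by
    ext j; simp [Pi.single_apply]
  calc (M.updateRow r v).det
      = Matrix.detRowAlternating (Function.update M r (∑ k, v k • (Pi.single k 1 : Fin m → R))) := by
        rw [← hv]; rfl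
    _ = ∑ k, Matrix.detRowAlternating (Function.update M r (v k • (Pi.single k 1 : Fin m → R))) :=
        (Matrix.detRowAlternating).toMultilinearMap.map_update_sum Finset.univ r _ M
    _ = ∑ k, v k * (M.updateRow r (Pi.single k 1)).det := by
        refine Finset.sum_congr rfl fun k _ => ?_
        rw [(Matrix.detRowAlternating).map_update_smul M r (v k) (Pi.single k 1 : Fin m → R)]
        rfl

private lemma det_updateColumn_expand (M : Matrix (Fin m) (Fin m) R) (c : Fin m) (v : Fin m → R) :
    (M.updateCol c v).det = ∑ k, v k * (M.updateCol c (Pi.single k 1)).det := by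
  have h : ∀ w : Fin m → R, (M.updateCol c w).det = (Mᵀ.updateRow c w).det := by
    intro w
    rw [Matrix.updateRow_transpose, Matrix.det_transpose]
  rw [h, det_updateRow_expand]
  exact Finset.sum_congr rfl fun k _ => by rw [h]

private lemma det_updateColumn_single (A : Matrix (Fin (m+1)) (Fin (m+1)) R) (i j : Fin (m+1)) :
    (A.updateCol j (Pi.single i 1)).det
      = (-1 : R) ^ ((i : ℕ) + (j : ℕ)) * (A.submatrix i.succAbove j.succAbove).det := by
  rw [Matrix.det_succ_column _ j]
  rw [Finset.sum_eq_single i]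
  · simp [Matrix.updateCol_self, Matrix.submatrix_updateCol_succAbove]
  · intro b _ hb
    simp [Matrix.updateCol_self, Pi.single_apply, hb]
  · simp

private lemma adjugate_eq_det_updateColumn (A : Matrix (Fin (m+1)) (Fin (m+1)) R)
    (i j : Fin (m+1)) :
    Matrix.adjugate A j i = (A.updateCol j (Pi.single i 1)).det := by
  rw [← Matrix.det_transpose, ← Matrix.updateRow_transpose, ← Matrix.adjugate_apply,
    ← Matrix.adjugate_transpose, Matrix.transpose_apply]

private lemma corner_det (j k : Fin (n+2)) :
    (((1 : Matrix (Fin (n+2)) (Fin (n+2)) R).updateCol (Fin.last (n+1))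
        (Pi.single k 1)).updateCol 0 (Pi.single j 1)).det
    = (if j = 0 ∧ k = Fin.last (n+1) then 1 else 0)
      - (if j = Fin.last (n+1) ∧ k = 0 then 1 else 0) := by
  have h0l : (0 : Fin (n+2)) ≠ Fin.last (n+1) := by simp [Fin.ext_iff]
  set M := ((1 : Matrix (Fin (n+2)) (Fin (n+2)) R).updateCol (Fin.last (n+1))
        (Pi.single k 1)).updateCol 0 (Pi.single j 1) with hM
  have hcol : ∀ i c, M i c = if c = 0 then (if i = j then 1 else 0)
      else if c = Fin.last (n+1) then (if i = k then 1 else 0) else (if i = c then 1 else 0) := by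
    intro i c
    rcases eq_or_ne c 0 with rfl | hc0
    · simp [hM, Matrix.updateCol_self, Pi.single_apply]
    · rcases eq_or_ne c (Fin.last (n+1)) with rfl | hcl
      · simp [hM, Matrix.updateCol_ne h0l.symm, Matrix.updateCol_self, Pi.single_apply,
          h0l.symm, hc0]
      · simp [hM, Matrix.updateCol_ne hc0, Matrix.updateCol_ne hcl, Matrix.one_apply, hc0, hcl]
  rcases eq_or_ne j 0 with rfl | hj0
  · rcases eq_or_ne k (Fin.last (n+1)) with rfl | hkl
    · have : M = 1 := by
        ext i c
        rw [hcol]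
        split_ifs with h1 h2 <;> simp_all [Matrix.one_apply]
      simp [this, h0l.symm]
    · -- columns k and last are equal (both e_k), or if k = 0 columns 0 and last equal
      have : M.det = 0 := by
        apply Matrix.det_zero_of_column_eq (show k ≠ Fin.last (n+1) from hkl)
        intro r
        rw [hcol, hcol]
        rcases eq_or_ne k 0 with rfl | hk0 <;> simp_all
      simp [this, hkl]
  · rcases eq_or_ne j (Fin.last (n+1)) with rfl | hjl
    · rcases eq_or_ne k 0 with rfl | hk0
      · -- swap matrix
        have : M = (Equiv.swap (0 : Fin (n+2)) (Fin.last (n+1))).permMatrix R := by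
          ext i c
          rw [hcol]
          simp only [Equiv.Perm.permMatrix, PEquiv.toMatrix_apply, Equiv.toPEquiv_apply,
            Option.mem_def, Option.some.injEq]
          rcases eq_or_ne i 0 with rfl | hi0
          · rw [Equiv.swap_apply_left]
            split_ifs <;> first
              | rfl
              | (exfalso; apply h0l; subst_vars; first | rfl | (symm; assumption) | assumption)
              | tauto
          · rcases eq_or_ne i (Fin.last (n+1)) with rfl | hil
            · rw [Equiv.swap_apply_right]
              split_ifs <;> first
                | rfl
                | (exfalso; apply hj0; subst_vars; first | rfl | (symm; assumption) | assumption)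
                | tauto
            · rw [Equiv.swap_apply_of_ne_of_ne hi0 hil]
              split_ifs <;> first
                | rfl
                | (exfalso; apply hi0; subst_vars; first | rfl | (symm; assumption) | assumption)
                | (exfalso; apply hil; subst_vars; first | rfl | (symm; assumption) | assumption)
                | tauto
        rw [this, Matrix.det_permutation, Equiv.Perm.sign_swap h0l]
        simp [h0l]
      · have : M.det = 0 := by
          rcases eq_or_ne k (Fin.last (n+1)) with rfl | hkl
          · apply Matrix.det_zero_of_column_eq h0l
            intro r; rw [hcol, hcol]; simp [h0l.symm]
          · apply Matrix.det_zero_of_column_eq (show k ≠ Fin.last (n+1) from hkl)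
            intro r; rw [hcol, hcol]; simp_all
        simp [this, hj0, hk0]
    · -- j is a middle index: columns 0 and j are equal
      have : M.det = 0 := by
        apply Matrix.det_zero_of_column_eq (Ne.symm hj0)
        intro r; rw [hcol, hcol]; simp_all
      simp [this, hj0, hjl]

private lemma dj_field {K : Type*} [Field K] {n : ℕ}
    (A : Matrix (Fin (n+2)) (Fin (n+2)) K) (hA : A.det ≠ 0) :
    A.det * (A.submatrix (fun i : Fin n => i.succ.castSucc)
        (fun j : Fin n => j.succ.castSucc)).det =
    (A.submatrix Fin.succ Fin.succ).det * (A.submatrix Fin.castSucc Fin.castSucc).det -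
    (A.submatrix Fin.succ Fin.castSucc).det * (A.submatrix Fin.castSucc Fin.succ).det := by
  classical
  have h0l : (0 : Fin (n+2)) ≠ Fin.last (n+1) := by simp [Fin.ext_iff]
  set u : Fin (n+2) → K := fun j => Matrix.adjugate A j 0 with hu
  set w : Fin (n+2) → K := fun j => Matrix.adjugate A j (Fin.last (n+1)) with hw
  set D := ((1 : Matrix (Fin (n+2)) (Fin (n+2)) K).updateCol 0 u).updateCol (Fin.last (n+1)) w with hD
  -- mulVec of adjugate columns
  have hmv : ∀ c : Fin (n+2), A.mulVec (fun j => Matrix.adjugate A j c)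
      = A.det • (Pi.single c 1 : Fin (n+2) → K) := by
    intro c
    funext i
    have : (A * Matrix.adjugate A) i c = (A.det • (1 : Matrix (Fin (n+2)) (Fin (n+2)) K)) i c := by
      rw [Matrix.mul_adjugate]
    simpa [Matrix.mul_apply, Matrix.mulVec, dotProduct, Matrix.one_apply,
      Pi.single_apply] using this
  -- A * D
  have hAD : A * D = (A.updateCol 0 (A.det • (Pi.single 0 1 : Fin (n+2) → K))).updateCol (Fin.last (n+1))
      (A.det • (Pi.single (Fin.last (n+1)) 1 : Fin (n+2) → K)) := by
    rw [hD, mul_updateColumn, mul_updateColumn, Matrix.mul_one, hmv, hmv]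
  -- interior matrix B
  set B := (A.updateCol 0 (Pi.single 0 1 : Fin (n+2) → K)).updateCol (Fin.last (n+1))
      (Pi.single (Fin.last (n+1)) 1 : Fin (n+2) → K) with hB
  have hdetAD : (A * D).det = A.det ^ 2 * B.det := by
    rw [hAD, Matrix.det_updateCol_smul, updateColumn_comm' _ h0l,
      Matrix.det_updateCol_smul, updateColumn_comm' _ h0l.symm, ← hB]
    ring
  -- det D via corner expansion
  have hDdet : D.det = u 0 * w (Fin.last (n+1)) - u (Fin.last (n+1)) * w 0 := by
    rw [hD, det_updateColumn_expand]
    have hsw : ∀ k, (((1 : Matrix (Fin (n+2)) (Fin (n+2)) K).updateCol 0 u).updateCol (Fin.last (n+1))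
        (Pi.single k 1)) = (((1 : Matrix (Fin (n+2)) (Fin (n+2)) K).updateCol (Fin.last (n+1))
        (Pi.single k 1)).updateCol 0 u) := fun k => updateColumn_comm' _ h0l _ _
    simp_rw [hsw, det_updateColumn_expand _ 0 u, corner_det]
    simp only [Finset.mul_sum, mul_sub, mul_ite, mul_one, mul_zero, Finset.sum_sub_distrib,
      ite_and]
    simp only [Finset.sum_ite_eq', Finset.mem_univ, if_true]
    ring
  -- det B equals the interior minor
  have hBdet : B.det = (A.submatrix (fun i : Fin n => i.succ.castSucc)
      (fun j : Fin n => j.succ.castSucc)).det := by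
    rw [hB, det_updateColumn_single]
    have h1 : ((-1 : K)) ^ ((Fin.last (n+1) : ℕ) + (Fin.last (n+1) : ℕ)) = 1 :=
      Even.neg_one_pow ⟨(n+1), by simp⟩
    rw [h1, one_mul, Fin.succAbove_last]
    have h2 : (A.updateCol 0 (Pi.single 0 1 : Fin (n+2) → K)).submatrix
        Fin.castSucc Fin.castSucc
        = (A.submatrix Fin.castSucc Fin.castSucc).updateCol 0
          (Pi.single 0 1 : Fin (n+1) → K) := by
      ext i j
      rcases eq_or_ne j 0 with rfl | hj
      · simp [Matrix.updateCol_self, Pi.single_apply, Fin.castSucc_eq_zero_iff]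
      · have : (j.castSucc : Fin (n+2)) ≠ 0 := by
          exact Fin.castSucc_ne_zero_iff.mpr hj
        simp [Matrix.updateCol_ne hj, Matrix.updateCol_ne this]
    rw [h2, det_updateColumn_single]
    simp only [Fin.val_zero, Nat.add_zero, pow_zero, one_mul, Fin.succAbove_zero,
      Matrix.submatrix_submatrix]
    rfl
  -- corner values
  have hcor : ∀ p q : Fin (n+2), Matrix.adjugate A p q
      = (-1 : K) ^ ((q : ℕ) + (p : ℕ)) * (A.submatrix q.succAbove p.succAbove).det := by
    intro p q
    rw [adjugate_eq_det_updateColumn, det_updateColumn_single]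
  have key : A.det * D.det = A.det ^ 2 * B.det := by
    rw [← hdetAD, Matrix.det_mul]
  rw [hDdet] at key
  have key2 : u 0 * w (Fin.last (n+1)) - u (Fin.last (n+1)) * w 0
      = A.det * B.det := mul_left_cancel₀ hA (by rw [key]; ring)
  have h1 : ((-1 : K)) ^ ((Fin.last (n+1) : ℕ) + (Fin.last (n+1) : ℕ)) = 1 :=
    Even.neg_one_pow ⟨(n+1), by simp⟩
  have c1 : u 0 = (A.submatrix Fin.succ Fin.succ).det := by
    rw [hu]; beta_reduce; rw [hcor]; simp
  have c2 : w (Fin.last (n+1)) = (A.submatrix Fin.castSucc Fin.castSucc).det := by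
    rw [hw]; beta_reduce; rw [hcor, h1, one_mul, Fin.succAbove_last]
  have c3 : u (Fin.last (n+1)) = (-1 : K)^(n+1) * (A.submatrix Fin.succ Fin.castSucc).det := by
    rw [hu]; beta_reduce; rw [hcor]; simp
  have c4 : w 0 = (-1 : K)^(n+1) * (A.submatrix Fin.castSucc Fin.succ).det := by
    rw [hw]; beta_reduce; rw [hcor]; simp
  have hsq : ((-1:K))^(n+1) * ((-1:K))^(n+1) = 1 := by
    rw [← pow_add]; exact Even.neg_one_pow ⟨n+1, by ring⟩
  calc A.det * (A.submatrix (fun i : Fin n => i.succ.castSucc)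
        (fun j : Fin n => j.succ.castSucc)).det
      = A.det * B.det := by rw [hBdet]
    _ = u 0 * w (Fin.last (n+1)) - u (Fin.last (n+1)) * w 0 := key2.symm
    _ = _ := by
        rw [c1, c2, c3, c4]
        linear_combination (-((A.submatrix Fin.succ Fin.castSucc).det *
          (A.submatrix Fin.castSucc Fin.succ).det)) * hsq

private theorem desnanot_jacobi {R : Type*} [CommRing R] {n : ℕ}
    (A : Matrix (Fin (n+2)) (Fin (n+2)) R) :
    A.det * (A.submatrix (fun i : Fin n => i.succ.castSucc)
        (fun j : Fin n => j.succ.castSucc)).det =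
    (A.submatrix Fin.succ Fin.succ).det * (A.submatrix Fin.castSucc Fin.castSucc).det -
    (A.submatrix Fin.succ Fin.castSucc).det * (A.submatrix Fin.castSucc Fin.succ).det := by
  classical
  set P := MvPolynomial (Fin (n+2) × Fin (n+2)) ℤ
  set K := FractionRing P
  set X : Matrix (Fin (n+2)) (Fin (n+2)) P :=
    Matrix.of (fun i j => MvPolynomial.X (i, j)) with hX
  set ψ : P →+* K := (algebraMap P K : P →+* K) with hψ
  have hinj : Function.Injective ψ := IsFractionRing.injective P K
  have hsubψ : ∀ (f g : Fin n → Fin (n+2)), ψ.mapMatrix (X.submatrix f g)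
      = (ψ.mapMatrix X).submatrix f g := fun _ _ => rfl
  have hsubψ' : ∀ (f g : Fin (n+1) → Fin (n+2)), ψ.mapMatrix (X.submatrix f g)
      = (ψ.mapMatrix X).submatrix f g := fun _ _ => rfl
  have hdX : (ψ.mapMatrix X).det ≠ 0 := by
    rw [← RingHom.map_det]
    intro h
    have hX0 : X.det = 0 := hinj (by simpa using h)
    have h2 := congrArg (MvPolynomial.eval
      (fun p : Fin (n+2) × Fin (n+2) => if p.1 = p.2 then (1 : ℤ) else 0)) hX0
    rw [RingHom.map_det] at h2
    have h3 : (MvPolynomial.eval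
        (fun p : Fin (n+2) × Fin (n+2) => if p.1 = p.2 then (1 : ℤ) else 0)).mapMatrix X
        = (1 : Matrix (Fin (n+2)) (Fin (n+2)) ℤ) := by
      ext i j
      simp [hX, Matrix.one_apply]
    rw [h3] at h2
    simp at h2
  have hP : X.det * (X.submatrix (fun i : Fin n => i.succ.castSucc)
        (fun j : Fin n => j.succ.castSucc)).det =
      (X.submatrix Fin.succ Fin.succ).det * (X.submatrix Fin.castSucc Fin.castSucc).det -
      (X.submatrix Fin.succ Fin.castSucc).det * (X.submatrix Fin.castSucc Fin.succ).det := by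
    apply hinj
    rw [_root_.map_mul, _root_.map_sub, _root_.map_mul, _root_.map_mul, RingHom.map_det, RingHom.map_det, RingHom.map_det,
      RingHom.map_det, RingHom.map_det, RingHom.map_det, hsubψ, hsubψ', hsubψ', hsubψ', hsubψ']
    exact dj_field (ψ.mapMatrix X) hdX
  set φ : P →+* R := (MvPolynomial.eval₂Hom (Int.castRingHom R) fun p => A p.1 p.2 : P →+* R)
    with hφ
  have hXA : φ.mapMatrix X = A := by
    ext i j
    simp only [hφ, hX, RingHom.mapMatrix_apply, Matrix.map_apply, Matrix.of_apply]
    exact MvPolynomial.eval₂Hom_X' _ _ _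
  have hsubφ : ∀ (f g : Fin n → Fin (n+2)), φ.mapMatrix (X.submatrix f g)
      = (φ.mapMatrix X).submatrix f g := fun _ _ => rfl
  have hsubφ' : ∀ (f g : Fin (n+1) → Fin (n+2)), φ.mapMatrix (X.submatrix f g)
      = (φ.mapMatrix X).submatrix f g := fun _ _ => rfl
  have h := congrArg φ hP
  rw [_root_.map_mul, _root_.map_sub, _root_.map_mul, _root_.map_mul, RingHom.map_det, RingHom.map_det, RingHom.map_det,
    RingHom.map_det, RingHom.map_det, RingHom.map_det, hsubφ, hsubφ', hsubφ', hsubφ', hsubφ',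
    hXA] at h
  exact h

end DesnanotJacobi

/-- Shifted Toeplitz determinant `Δ_n^ℓ = det [μ(ℓ + j − i)]_{i,j = 1..n}`, with `Δ_0^ℓ = 1`. -/
noncomputable def Delta {F : Type*} [Field F] (μ : ℤ → F) (n : ℕ) (ℓ : ℤ) : F :=
  (Matrix.of fun i j : Fin n => μ (ℓ + (j : ℤ) - (i : ℤ))).det

/-- Bordered shifted Toeplitz determinant `℘_n^ℓ(x)`: the (n+1)×(n+1) determinant whose
rows `i = 1..n` are `(μ_{ℓ−i+1}, …, μ_{ℓ−i+1+n})` and whose last row is `(1, x, …, xⁿ)`. -/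
noncomputable def wp {F : Type*} [Field F] (μ : ℤ → F) (n : ℕ) (ℓ : ℤ) : Polynomial F :=
  (Matrix.of fun i j : Fin (n + 1) =>
    if (i : ℕ) < n then Polynomial.C (μ (ℓ - (i : ℤ) + (j : ℤ))) else Polynomial.X ^ (j : ℕ)).det

/-- `x·Δ_n^ℓ·℘_{n−1}^ℓ(x) − Δ_n^{ℓ+1}·℘_{n−1}^{ℓ−1}(x) = Δ_{n−1}^ℓ·℘_n^ℓ(x)` in `F[x]`
(stated for `n ≥ 1`, i.e. with `n` replaced by `n+1`). -/
theorem wp_circle_identity {F : Type*} [Field F] (μ : ℤ → F) (n : ℕ) (ℓ : ℤ) :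
    Polynomial.X * Polynomial.C (Delta μ (n + 1) ℓ) * wp μ n ℓ -
      Polynomial.C (Delta μ (n + 1) (ℓ + 1)) * wp μ n (ℓ - 1) =
    Polynomial.C (Delta μ n ℓ) * wp μ (n + 1) ℓ := by
  classical
  set A : Matrix (Fin (n+2)) (Fin (n+2)) (Polynomial F) := Matrix.of fun i j : Fin (n+2) =>
    if (i : ℕ) < n + 1 then Polynomial.C (μ (ℓ - (i : ℤ) + (j : ℤ)))
    else Polynomial.X ^ (j : ℕ) with hA
  have hdet : A.det = wp μ (n+1) ℓ := rfl
  have h2 : (A.submatrix (fun i : Fin n => i.succ.castSucc)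
      (fun j : Fin n => j.succ.castSucc)).det = Polynomial.C (Delta μ n ℓ) := by
    have : A.submatrix (fun i : Fin n => i.succ.castSucc) (fun j : Fin n => j.succ.castSucc)
        = (Polynomial.C : F →+* Polynomial F).mapMatrix
          (Matrix.of fun i j : Fin n => μ (ℓ + (j : ℤ) - (i : ℤ))) := by
      refine Matrix.ext fun i j => ?_
      have hi : ((i.succ.castSucc : Fin (n+2)) : ℕ) = (i : ℕ) + 1 := by simp
      have hj : ((j.succ.castSucc : Fin (n+2)) : ℕ) = (j : ℕ) + 1 := by simp
      simp only [hA, Matrix.submatrix_apply, Matrix.of_apply, RingHom.mapMatrix_apply,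
        Matrix.map_apply, hi, hj]
      rw [if_pos (by omega : (i : ℕ) + 1 < n + 1)]
      exact congrArg (fun t => Polynomial.C (μ t)) (by push_cast [hi, hj, Fin.val_succ, Fin.coe_castSucc]; ring)
    rw [this, ← RingHom.map_det]
    rfl
  have h3 : (A.submatrix Fin.succ Fin.succ).det = Polynomial.X * wp μ n ℓ := by
    set M : Matrix (Fin (n+1)) (Fin (n+1)) (Polynomial F) := Matrix.of fun i j : Fin (n+1) =>
      if (i : ℕ) < n then Polynomial.C (μ (ℓ - (i : ℤ) + (j : ℤ))) else Polynomial.X ^ (j : ℕ)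
      with hM
    have hrow : M (Fin.last n) = fun j : Fin (n+1) => Polynomial.X ^ (j : ℕ) := by
      funext j; simp [hM]
    have : A.submatrix Fin.succ Fin.succ
        = M.updateRow (Fin.last n) ((Polynomial.X : Polynomial F) • (fun j : Fin (n+1) => (Polynomial.X : Polynomial F) ^ (j : ℕ)) : Fin (n+1) → Polynomial F) := by
      refine Matrix.ext fun i j => ?_
      rcases eq_or_ne i (Fin.last n) with rfl | hi
      · have h1 : ¬ ((Fin.last n).succ : ℕ) < n + 1 := by simp
        simp only [hA, Matrix.submatrix_apply, Matrix.of_apply, h1, if_false,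
          Matrix.updateRow_self, Pi.smul_apply, smul_eq_mul]
        rw [Fin.val_succ, pow_succ]
        ring
      · have hne : (i : ℕ) ≠ n := fun hc => hi (Fin.ext (by simp [hc, Fin.val_last]))
        have hilt : (i : ℕ) < n := by have := i.isLt; omega
        simp only [hA, Matrix.submatrix_apply, Matrix.of_apply, Matrix.updateRow_ne hi, hM]
        rw [if_pos (show ((i.succ : Fin (n+2)) : ℕ) < n + 1 by rw [Fin.val_succ]; omega), if_pos hilt]
        exact congrArg (fun t => Polynomial.C (μ t)) (by push_cast [Fin.val_succ, Fin.coe_castSucc]; ring)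
    rw [this, Matrix.det_updateRow_smul, ← hrow, Matrix.updateRow_eq_self]
    rfl
  have h4 : (A.submatrix Fin.castSucc Fin.castSucc).det = Polynomial.C (Delta μ (n+1) ℓ) := by
    have : A.submatrix Fin.castSucc Fin.castSucc
        = (Polynomial.C : F →+* Polynomial F).mapMatrix
          (Matrix.of fun i j : Fin (n+1) => μ (ℓ + (j : ℤ) - (i : ℤ))) := by
      refine Matrix.ext fun i j => ?_
      simp only [hA, Matrix.submatrix_apply, Matrix.of_apply, RingHom.mapMatrix_apply,
        Matrix.map_apply]
      rw [if_pos (by simpa using i.isLt : ((i.castSucc : Fin (n+2)) : ℕ) < n + 1)]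
      exact congrArg (fun t => Polynomial.C (μ t)) (by push_cast [Fin.val_succ, Fin.coe_castSucc]; ring)
    rw [this, ← RingHom.map_det]
    rfl
  have h5 : (A.submatrix Fin.succ Fin.castSucc).det = wp μ n (ℓ - 1) := by
    have : A.submatrix Fin.succ Fin.castSucc
        = Matrix.of (fun i j : Fin (n+1) =>
          if (i : ℕ) < n then Polynomial.C (μ (ℓ - 1 - (i : ℤ) + (j : ℤ)))
          else Polynomial.X ^ (j : ℕ)) := by
      refine Matrix.ext fun i j => ?_
      simp only [hA, Matrix.submatrix_apply, Matrix.of_apply, Fin.val_succ, Fin.coe_castSucc]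
      rcases Nat.lt_or_ge (i : ℕ) n with h | h
      · rw [if_pos (by omega), if_pos h]
        exact congrArg (fun t => Polynomial.C (μ t)) (by push_cast [Fin.val_succ, Fin.coe_castSucc]; ring)
      · rw [if_neg (by omega), if_neg (by omega)]
    rw [this]
    rfl
  have h6 : (A.submatrix Fin.castSucc Fin.succ).det = Polynomial.C (Delta μ (n+1) (ℓ+1)) := by
    have : A.submatrix Fin.castSucc Fin.succ
        = (Polynomial.C : F →+* Polynomial F).mapMatrix
          (Matrix.of fun i j : Fin (n+1) => μ (ℓ + 1 + (j : ℤ) - (i : ℤ))) := by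
      refine Matrix.ext fun i j => ?_
      simp only [hA, Matrix.submatrix_apply, Matrix.of_apply, RingHom.mapMatrix_apply,
        Matrix.map_apply]
      rw [if_pos (by simpa using i.isLt : ((i.castSucc : Fin (n+2)) : ℕ) < n + 1)]
      exact congrArg (fun t => Polynomial.C (μ t)) (by push_cast [Fin.val_succ, Fin.coe_castSucc]; ring)
    rw [this, ← RingHom.map_det]
    rfl
  have hdj := desnanot_jacobi A
  rw [hdet, h2, h3, h4, h5, h6] at hdj
  linear_combination -hdj
end

section
/- With μ, Δ_n^ℓ, ℘_n^ℓ as above, the identity ℘_n^{ℓ−1}(x)·Δ_n^ℓ + Δ_{n+1}^ℓ·℘_{n−1}^{ℓ−1}(x) = ℘_n^ℓ(x)·Δ_n^{ℓ−1} holds in F[x]. -/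
/-! The identity is a three-term Plücker relation. Let `N` be the `(n+3) × (n+2)` matrix with
moment rows `μ_{ℓ-i+j}` for `i = 0, …, n+1` and last row `(1, x, …, x^{n+1})`, and `D_i` its
maximal minor without row `i`. Laplace expansion of `N` bordered by a copy of one of its columns
gives `∑ (-1)^i D_i N_i = 0`. Apply to this the row-linear functional
`u ↦ det (T with its last row replaced by the first n+1 entries of u)`, where `T` is the
Toeplitz matrix of `Δ_{n+1}^{ℓ-1}`: rows `1, …, n` of `N` are rows of `T` and contribute nothing, and the rows `0`, `n+1`, `n+2`
produce the three products of the identity. -/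

open Polynomial Matrix

namespace Matrix

variable {R : Type*} [CommRing R]

theorem sum_neg_one_pow_mul_det_submatrix_succAbove {m : ℕ}
    (N : Matrix (Fin (m + 1)) (Fin m) R) (j : Fin m) :
    ∑ i : Fin (m + 1), (-1) ^ (i : ℕ) * N i j * (N.submatrix i.succAbove id).det = 0 := by
  let S : Matrix (Fin (m + 1)) (Fin (m + 1)) R := of fun i => Fin.cons (N i j) (N i)
  have hS : S.det = 0 := det_zero_of_column_eq (Fin.succ_ne_zero j).symm fun _ => rfl
  rwa [det_succ_column_zero] at hS

theorem det_updateRow_sum_smul {ι κ : Type*} [Fintype ι] [DecidableEq ι] (A : Matrix ι ι R)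
    (r : ι) (s : Finset κ) (c : κ → R) (v : κ → ι → R) :
    (A.updateRow r (∑ k ∈ s, c k • v k)).det = ∑ k ∈ s, c k * (A.updateRow r (v k)).det := by
  have h := map_sum (detRowAlternating.toMultilinearMap.toLinearMap A r) (fun k => c k • v k) s
  simp only [map_smul, smul_eq_mul] at h
  exact h

theorem sum_neg_one_pow_mul_det_submatrix_succAbove_mul_det_updateRow {m : ℕ} {ι : Type*}
    [Fintype ι] [DecidableEq ι] (N : Matrix (Fin (m + 1)) (Fin m) R) (c : ι → Fin m)
    (A : Matrix ι ι R) (r : ι) :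
    ∑ i : Fin (m + 1), (-1) ^ (i : ℕ) * (N.submatrix i.succAbove id).det *
      (A.updateRow r fun k => N i (c k)).det = 0 := by
  have hrows : ∑ i : Fin (m + 1),
      ((-1) ^ (i : ℕ) * (N.submatrix i.succAbove id).det) • (fun k => N i (c k)) = 0 := by
    funext k
    simpa [Finset.sum_apply, mul_right_comm] using
      sum_neg_one_pow_mul_det_submatrix_succAbove N (c k)
  rw [← det_updateRow_sum_smul, hrows]
  exact det_eq_zero_of_row_eq_zero r fun _ => by simp

end Matrix

section MomentMatrices

variable {R : Type*}

def momentToeplitz (ν : ℤ → R) (m : ℕ) (ℓ : ℤ) : Matrix (Fin m) (Fin m) R :=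
  of fun i j => ν (ℓ - i + j)

def borderedMomentMatrix [Monoid R] (ν : ℤ → R) (x : R) (k m : ℕ) (ℓ : ℤ) :
    Matrix (Fin (k + 1)) (Fin m) R :=
  of fun i j => if (i : ℕ) < k then ν (ℓ - i + j) else x ^ (j : ℕ)

variable {ν : ℤ → R}

theorem momentToeplitz_updateRow_last_eq_submatrix_finRotate {k : ℕ} {ℓ : ℤ} :
    (momentToeplitz ν (k + 1) (ℓ - 1)).updateRow (Fin.last k) (fun j : Fin (k + 1) => ν (ℓ + j)) =
      (momentToeplitz ν (k + 1) ℓ).submatrix (finRotate (k + 1)) id := by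
  ext i j
  refine Fin.lastCases ?_ (fun i => ?_) i
  · simp [momentToeplitz]
  · rw [updateRow_ne (Fin.castSucc_lt_last i).ne]
    simp only [momentToeplitz, submatrix_apply, of_apply, id,
      coe_finRotate_of_ne_last (Fin.castSucc_lt_last i).ne, Fin.val_castSucc]
    congr 1; push_cast; ring

variable [Monoid R] {x : R}

theorem borderedMomentMatrix_zero {k m : ℕ} {ℓ : ℤ} :
    borderedMomentMatrix ν x (k + 1) m ℓ 0 = fun j : Fin m => ν (ℓ + j) := by
  funext j
  simp [borderedMomentMatrix]

theorem borderedMomentMatrix_succ {k m : ℕ} {ℓ : ℤ} (i : Fin (k + 1)) :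
    borderedMomentMatrix ν x (k + 1) m ℓ i.succ = borderedMomentMatrix ν x k m (ℓ - 1) i := by
  funext j
  simp only [borderedMomentMatrix, of_apply, Fin.val_succ, Nat.add_lt_add_iff_right]
  split_ifs
  · congr 1; push_cast; ring
  · rfl

theorem borderedMomentMatrix_submatrix_succ {k m : ℕ} {ℓ : ℤ} :
    (borderedMomentMatrix ν x (k + 1) m ℓ).submatrix Fin.succ id =
      borderedMomentMatrix ν x k m (ℓ - 1) := by
  ext i j
  exact congrFun (borderedMomentMatrix_succ i) j

theorem borderedMomentMatrix_castSucc {m : ℕ} {ℓ : ℤ} (i : Fin m) :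
    borderedMomentMatrix ν x m m ℓ i.castSucc = momentToeplitz ν m ℓ i := by
  funext j
  simp [borderedMomentMatrix, momentToeplitz]

theorem borderedMomentMatrix_last {k m : ℕ} {ℓ : ℤ} :
    borderedMomentMatrix ν x k m ℓ (Fin.last k) = fun j : Fin m => x ^ (j : ℕ) := by
  funext j
  simp [borderedMomentMatrix]

theorem borderedMomentMatrix_submatrix_succAbove_castSucc_last {k m : ℕ} {ℓ : ℤ} :
    (borderedMomentMatrix ν x (k + 1) m ℓ).submatrix (Fin.last k).castSucc.succAbove id =
      borderedMomentMatrix ν x k m ℓ := by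
  ext i j
  refine Fin.lastCases ?_ (fun i => ?_) i
  · simp [borderedMomentMatrix, Fin.succAbove_of_le_castSucc]
  · simp [borderedMomentMatrix, Fin.succAbove_of_castSucc_lt]

theorem borderedMomentMatrix_submatrix_castSucc {m : ℕ} {ℓ : ℤ} :
    (borderedMomentMatrix ν x m m ℓ).submatrix Fin.castSucc id = momentToeplitz ν m ℓ := by
  ext i j
  exact congrFun (borderedMomentMatrix_castSucc i) j

theorem borderedMomentMatrix_submatrix_id_castSucc {k m : ℕ} {ℓ : ℤ} :
    (borderedMomentMatrix ν x k (m + 1) ℓ).submatrix id Fin.castSucc =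
      borderedMomentMatrix ν x k m ℓ := by
  ext i j
  simp [borderedMomentMatrix]

theorem momentToeplitz_updateRow_last_pow {k : ℕ} {ℓ : ℤ} :
    (momentToeplitz ν (k + 1) ℓ).updateRow (Fin.last k) (fun j : Fin (k + 1) => x ^ (j : ℕ)) =
      borderedMomentMatrix ν x k (k + 1) ℓ := by
  ext i j
  refine Fin.lastCases ?_ (fun i => ?_) i
  · simp [borderedMomentMatrix]
  · rw [updateRow_ne (Fin.castSucc_lt_last i).ne]
    simp [borderedMomentMatrix, momentToeplitz]

end MomentMatrices

theorem det_borderedMomentMatrix_three_term {R : Type*} [CommRing R] (ν : ℤ → R) (x : R)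
    (n : ℕ) (ℓ : ℤ) :
    (borderedMomentMatrix ν x (n + 1) (n + 2) (ℓ - 1)).det * (momentToeplitz ν (n + 1) ℓ).det +
        (momentToeplitz ν (n + 2) ℓ).det * (borderedMomentMatrix ν x n (n + 1) (ℓ - 1)).det =
      (borderedMomentMatrix ν x (n + 1) (n + 2) ℓ).det *
        (momentToeplitz ν (n + 1) (ℓ - 1)).det := by
  have H := sum_neg_one_pow_mul_det_submatrix_succAbove_mul_det_updateRow
    (borderedMomentMatrix ν x (n + 2) (n + 2) ℓ) Fin.castSucc
    (momentToeplitz ν (n + 1) (ℓ - 1)) (Fin.last n)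
  have hrow (i) : (fun j : Fin (n + 1) => borderedMomentMatrix ν x (n + 2) (n + 2) ℓ i j.castSucc)
      = borderedMomentMatrix ν x (n + 2) (n + 1) ℓ i :=
    congrFun borderedMomentMatrix_submatrix_id_castSucc i
  simp only [hrow] at H
  rw [Fin.sum_univ_succ, Fin.sum_univ_castSucc, Fin.sum_univ_castSucc,
    Finset.sum_eq_zero fun p _ => ?_] at H
  · simp only [borderedMomentMatrix_succ] at H
    simp only [borderedMomentMatrix_castSucc, borderedMomentMatrix_last, borderedMomentMatrix_zero,
      updateRow_eq_self, momentToeplitz_updateRow_last_pow,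
      momentToeplitz_updateRow_last_eq_submatrix_finRotate, det_permute, sign_finRotate,
      Fin.succAbove_zero, borderedMomentMatrix_submatrix_succ, Fin.succ_castSucc, Fin.succ_last,
      borderedMomentMatrix_submatrix_succAbove_castSucc_last, Fin.succAbove_last,
      borderedMomentMatrix_submatrix_castSucc, Fin.val_zero, Fin.val_castSucc, Fin.val_last,
      Units.val_pow_eq_pow_val, Units.val_neg, Units.val_one, Int.cast_pow, Int.cast_neg,
      Int.cast_one, Nat.add_sub_cancel, Nat.succ_eq_add_one, pow_zero, one_mul, zero_add,
      pow_succ] at H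
    rcases neg_one_pow_eq_or R n with h | h <;> rw [h] at H
    · linear_combination H
    · linear_combination -H
  · rw [borderedMomentMatrix_succ, borderedMomentMatrix_castSucc,
      det_updateRow_eq_zero (M := momentToeplitz ν (n + 1) (ℓ - 1)) (Fin.castSucc_lt_last p).ne,
      mul_zero]

theorem wp_eq_det_borderedMomentMatrix {F : Type*} [Field F] (μ : ℤ → F) (n : ℕ) (ℓ : ℤ) :
    wp μ n ℓ = (borderedMomentMatrix (C ∘ μ) X n (n + 1) ℓ).det :=
  rfl

theorem C_Delta_eq_det_momentToeplitz {F : Type*} [Field F] (μ : ℤ → F) (m : ℕ) (ℓ : ℤ) :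
    C (Delta μ m ℓ) = (momentToeplitz (C ∘ μ) m ℓ).det := by
  rw [Delta, RingHom.map_det]
  congr 1
  ext i j
  simp only [RingHom.mapMatrix_apply, map_apply, of_apply, momentToeplitz, Function.comp_apply,
    sub_add_eq_add_sub]

/-- `℘_n^{ℓ−1}(x)·Δ_n^ℓ + Δ_{n+1}^ℓ·℘_{n−1}^{ℓ−1}(x) = ℘_n^ℓ(x)·Δ_n^{ℓ−1}` in `F[x]`
(stated for `n ≥ 1`, i.e. with `n` replaced by `n+1`). -/
theorem wp_identity_uno {F : Type*} [Field F] (μ : ℤ → F) (n : ℕ) (ℓ : ℤ) :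
    wp μ (n + 1) (ℓ - 1) * Polynomial.C (Delta μ (n + 1) ℓ) +
      Polynomial.C (Delta μ (n + 2) ℓ) * wp μ n (ℓ - 1) =
    wp μ (n + 1) ℓ * Polynomial.C (Delta μ (n + 1) (ℓ - 1)) := by
  simp only [wp_eq_det_borderedMomentMatrix, C_Delta_eq_det_momentToeplitz]
  exact det_borderedMomentMatrix_three_term (C ∘ μ) X n ℓ
end

section
/- Staircase dimension count, strict case: With notation as above, if ε_α > 1 for some α with 1 ≤ α < k, then the cardinality of M(I,ε) is strictly greater than 2n − 2. -/
/-!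
Shrinking every row part of `M(I,ε)` to the positions that avoid all columns `j_β` makes the
`k` hooks pairwise disjoint, since the columns `j_α` and the rows `i_α` are strictly increasing.
The shrunk hook `α` still has at least `2 (i_α - j_α) - ε_α` positions: the only column `j_β`
strictly between `j_α` and `i_α` can be `j_{α+1} = i_α - ε_α`, and only when `ε_α ≥ 1`.
As `∑ (i_α - j_α)` telescopes to `n - 1 + ∑ ε_α`, this gives `#M(I,ε) ≥ 2n - 2 + ∑ ε_α`.
-/

open scoped Classical

/-- `j_α = i_{α−1} − ε_{α−1}`. -/
def jidx (i ε : ℕ → ℕ) (α : ℕ) : ℕ := i (α - 1) - ε (α - 1)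

/-- The set `M(I,ε)` of matrix positions: for each `α = 1..k`, the positions
`(r, j_α)` with `j_α ≤ r ≤ i_α`, together with the positions `(i_α, c)` with
`j_α < c < i_α` and `c ∉ {j_β : β < α, j_β < i_α}`. -/
noncomputable def Mset (k : ℕ) (i ε : ℕ → ℕ) : Finset (ℕ × ℕ) :=
  (Finset.Icc 1 k).biUnion fun α =>
    ((Finset.Icc (jidx i ε α) (i α)).image fun r => (r, jidx i ε α)) ∪
      (((Finset.Ioo (jidx i ε α) (i α)).filter fun c =>
          ∀ β ∈ Finset.Ico 1 α, ¬(jidx i ε β < i α ∧ c = jidx i ε β)).image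
        fun c => (i α, c))

open Finset

variable {k : ℕ} {i ε : ℕ → ℕ}

lemma jidx_succ (α : ℕ) : jidx i ε (α + 1) = i α - ε α := rfl

lemma strictMonoOn_Iic_of_chain (hchain : ∀ α, 1 ≤ α → α < k → i (α - 1) + ε α < i α)
    (hlast : i (k - 1) < i k) : StrictMonoOn i (Set.Iic k) :=
  strictMonoOn_Iic_of_lt_succ fun α hα => by
    rw [Order.succ_eq_add_one]
    rcases (Nat.succ_le_of_lt hα).lt_or_eq with h | h
    · have := hchain (α + 1) (by omega) h
      simp only [Nat.add_sub_cancel] at this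
      omega
    · simpa [← h] using hlast

lemma jidx_strictMonoOn_Icc (hchain : ∀ α, 1 ≤ α → α < k → i (α - 1) + ε α < i α) :
    StrictMonoOn (jidx i ε) (Set.Icc 1 k) :=
  strictMonoOn_of_lt_add_one Set.ordConnected_Icc fun α _ hα hα' => by
    have := hchain α hα.1 (by simp at hα'; omega)
    have : jidx i ε α ≤ i (α - 1) := Nat.sub_le _ _
    rw [jidx_succ]
    omega

lemma jidx_lt_self (hchain : ∀ α, 1 ≤ α → α < k → i (α - 1) + ε α < i α)
    (hlast : i (k - 1) < i k) {α : ℕ} (hα : α ∈ Icc 1 k) : jidx i ε α < i α := by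
  rw [mem_Icc] at hα
  have := strictMonoOn_Iic_of_chain hchain hlast (Set.mem_Iic.2 (by omega : α - 1 ≤ k))
    (Set.mem_Iic.2 hα.2) (by omega : α - 1 < α)
  exact (Nat.sub_le _ _).trans_lt this

lemma eq_add_one_of_jidx_mem_Ioo (hchain : ∀ α, 1 ≤ α → α < k → i (α - 1) + ε α < i α)
    {α β : ℕ} (hα : α ∈ Icc 1 k) (hβ : β ∈ Icc 1 k)
    (h : jidx i ε β ∈ Ioo (jidx i ε α) (i α)) : β = α + 1 ∧ 0 < ε α := by
  have hmono := (jidx_strictMonoOn_Icc hchain).monotoneOn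
  rw [mem_Icc] at hα hβ
  rw [mem_Ioo] at h
  have hαβ : α < β := by
    by_contra! hβα
    exact (hmono (Set.mem_Icc.2 hβ) (Set.mem_Icc.2 hα) hβα).not_gt h.1
  have hβα : β = α + 1 := by
    by_contra hne
    have hj := hmono (Set.mem_Icc.2 ⟨by omega, by omega⟩) (Set.mem_Icc.2 hβ)
      (by omega : α + 1 + 1 ≤ β)
    have := hchain (α + 1) (by omega) (by omega)
    rw [jidx_succ] at hj
    simp only [Nat.add_sub_cancel] at this
    omega
  subst hβα
  rw [jidx_succ] at h
  exact ⟨rfl, by omega⟩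

noncomputable def colPart (i ε : ℕ → ℕ) (α : ℕ) : Finset (ℕ × ℕ) :=
  (Icc (jidx i ε α) (i α)).image fun r => (r, jidx i ε α)

noncomputable def rowPart (k : ℕ) (i ε : ℕ → ℕ) (α : ℕ) : Finset (ℕ × ℕ) :=
  (Ioo (jidx i ε α) (i α) \ (Icc 1 k).image (jidx i ε)).image (Prod.mk (i α))

lemma biUnion_colPart_union_rowPart_subset_Mset :
    (Icc 1 k).biUnion (fun α => colPart i ε α ∪ rowPart k i ε α) ⊆ Mset k i ε := by
  refine biUnion_mono fun α hα => union_subset_union subset_rfl fun x hx => ?_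
  obtain ⟨c, hc, rfl⟩ := mem_image.1 hx
  obtain ⟨hcIoo, hcj⟩ := mem_sdiff.1 hc
  refine mem_image_of_mem _ ?_
  simp only [mem_filter]
  refine ⟨hcIoo, fun β hβ hcβ => hcj (mem_image.2 ⟨β, ?_, hcβ.2.symm⟩)⟩
  simp only [mem_Ico, mem_Icc] at hα hβ ⊢
  omega

lemma card_colPart (α : ℕ) : #(colPart i ε α) = i α + 1 - jidx i ε α := by
  rw [colPart, card_image_of_injective _ (Prod.mk_left_injective _), Nat.card_Icc]

lemma card_Ioo_inter_image_jidx_le (hchain : ∀ α, 1 ≤ α → α < k → i (α - 1) + ε α < i α)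
    {α : ℕ} (hα : α ∈ Icc 1 k) :
    #(Ioo (jidx i ε α) (i α) ∩ (Icc 1 k).image (jidx i ε)) ≤ if α < k then ε α else 0 := by
  have key : ∀ c ∈ Ioo (jidx i ε α) (i α) ∩ (Icc 1 k).image (jidx i ε),
      c = jidx i ε (α + 1) ∧ α < k ∧ 0 < ε α := by
    intro c hc
    obtain ⟨hcIoo, hcj⟩ := mem_inter.1 hc
    obtain ⟨β, hβ, rfl⟩ := mem_image.1 hcj
    obtain ⟨rfl, hεα⟩ := eq_add_one_of_jidx_mem_Ioo hchain hα hβ hcIoo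
    exact ⟨rfl, by simp at hβ; omega, hεα⟩
  rcases eq_empty_or_nonempty (Ioo (jidx i ε α) (i α) ∩ (Icc 1 k).image (jidx i ε))
    with h | ⟨c, hc⟩
  · simp [h]
  obtain ⟨-, hαk, hεα⟩ := key c hc
  rw [if_pos hαk]
  calc _ ≤ 1 := card_le_one.2 fun a ha b hb => (key a ha).1.trans (key b hb).1.symm
    _ ≤ ε α := hεα

lemma two_mul_sub_jidx_le_card_colPart_add_card_rowPart
    (hchain : ∀ α, 1 ≤ α → α < k → i (α - 1) + ε α < i α) (hlast : i (k - 1) < i k)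
    {α : ℕ} (hα : α ∈ Icc 1 k) :
    2 * (i α - jidx i ε α) ≤
      #(colPart i ε α) + #(rowPart k i ε α) + if α < k then ε α else 0 := by
  have hrow := card_sdiff_add_card_inter (Ioo (jidx i ε α) (i α)) ((Icc 1 k).image (jidx i ε))
  rw [← card_image_of_injective _ (Prod.mk_right_injective (i α)), Nat.card_Ioo] at hrow
  have := card_Ioo_inter_image_jidx_le hchain hα
  have := jidx_lt_self hchain hlast hα
  rw [card_colPart, rowPart]
  omega

lemma disjoint_colPart_rowPart {α : ℕ} (hα : α ∈ Icc 1 k) (β : ℕ) :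
    Disjoint (colPart i ε α) (rowPart k i ε β) := by
  simp only [colPart, rowPart, disjoint_left, mem_image, mem_sdiff, not_exists, not_and]
  rintro _ ⟨r, -, rfl⟩ c ⟨-, hc⟩ hrc
  exact hc α hα (Prod.ext_iff.1 hrc).2.symm

lemma disjoint_colPart {α β : ℕ} (h : jidx i ε α ≠ jidx i ε β) :
    Disjoint (colPart i ε α) (colPart i ε β) := by
  simp only [colPart, disjoint_left, mem_image, not_exists, not_and]
  rintro _ ⟨r, -, rfl⟩ s - hsr
  exact h (Prod.ext_iff.1 hsr).2.symm

lemma disjoint_rowPart {α β : ℕ} (h : i α ≠ i β) :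
    Disjoint (rowPart k i ε α) (rowPart k i ε β) := by
  simp only [rowPart, disjoint_left, mem_image, not_exists, not_and]
  rintro _ ⟨r, -, rfl⟩ s - hsr
  exact h (Prod.ext_iff.1 hsr).1.symm

lemma pairwiseDisjoint_colPart_union_rowPart
    (hchain : ∀ α, 1 ≤ α → α < k → i (α - 1) + ε α < i α) (hlast : i (k - 1) < i k) :
    (Icc 1 k : Set ℕ).PairwiseDisjoint fun α => colPart i ε α ∪ rowPart k i ε α := by
  intro α hα β hβ hαβ
  have hα' : α ∈ Set.Iic k := Set.mem_Iic.2 (mem_Icc.1 hα).2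
  have hβ' : β ∈ Set.Iic k := Set.mem_Iic.2 (mem_Icc.1 hβ).2
  refine disjoint_union_left.2 ⟨disjoint_union_right.2 ⟨?_, disjoint_colPart_rowPart hα β⟩,
    disjoint_union_right.2 ⟨(disjoint_colPart_rowPart hβ α).symm, ?_⟩⟩
  · exact disjoint_colPart ((jidx_strictMonoOn_Icc hchain).injOn.ne (by simpa using hα)
      (by simpa using hβ) hαβ)
  · exact disjoint_rowPart ((strictMonoOn_Iic_of_chain hchain hlast).injOn.ne hα' hβ' hαβ)

lemma sum_sub_jidx_add_eq (hε0 : ε 0 = 0) (hchain : ∀ α, 1 ≤ α → α < k → i (α - 1) + ε α < i α)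
    (hlast : i (k - 1) < i k) :
    ∑ α ∈ Icc 1 k, (i α - jidx i ε α) + i 0 = i k + ∑ β ∈ range k, ε β := by
  have hmono := strictMonoOn_Iic_of_chain hchain hlast
  suffices ∀ m ≤ k, ∑ α ∈ Icc 1 m, (i α - jidx i ε α) + i 0 = i m + ∑ β ∈ range m, ε β from
    this k le_rfl
  intro m hm
  induction m with
  | zero => simp
  | succ m ih =>
    have hεm : ε m ≤ i m := by
      rcases Nat.eq_zero_or_pos m with rfl | hm0
      · omega
      · have := hchain m hm0 (by omega); omega
    have him : i m < i (m + 1) :=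
      hmono (Set.mem_Iic.2 (by omega)) (Set.mem_Iic.2 hm) (Nat.lt_succ_self m)
    rw [sum_Icc_succ_top (by omega), sum_range_succ, jidx_succ]
    have := ih (by omega)
    omega

theorem two_mul_add_sum_le_card_Mset (hε0 : ε 0 = 0)
    (hchain : ∀ α, 1 ≤ α → α < k → i (α - 1) + ε α < i α) (hlast : i (k - 1) < i k) :
    2 * i k + ∑ β ∈ range k, ε β ≤ #(Mset k i ε) + 2 * i 0 := by
  have hpieces : 2 * ∑ α ∈ Icc 1 k, (i α - jidx i ε α) ≤
      #(Mset k i ε) + ∑ β ∈ range k, ε β :=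
    calc 2 * ∑ α ∈ Icc 1 k, (i α - jidx i ε α)
        ≤ ∑ α ∈ Icc 1 k, (#(colPart i ε α ∪ rowPart k i ε α) + if α < k then ε α else 0) := by
          rw [mul_sum]
          refine sum_le_sum fun α hα => ?_
          rw [card_union_of_disjoint (disjoint_colPart_rowPart hα α)]
          exact two_mul_sub_jidx_le_card_colPart_add_card_rowPart hchain hlast hα
      _ = #((Icc 1 k).biUnion fun α => colPart i ε α ∪ rowPart k i ε α) +
            ∑ β ∈ Icc 1 k with β < k, ε β := by
          rw [sum_add_distrib, sum_filter,
            card_biUnion (pairwiseDisjoint_colPart_union_rowPart hchain hlast)]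
      _ ≤ #(Mset k i ε) + ∑ β ∈ range k, ε β := by
          gcongr
          · exact biUnion_colPart_union_rowPart_subset_Mset
          · intro β hβ
            simp only [mem_filter, mem_Icc] at hβ
            exact mem_range.2 hβ.2
  have := sum_sub_jidx_add_eq hε0 hchain hlast
  omega

theorem staircase_card_gt_general (n k : ℕ) (i ε : ℕ → ℕ)
    (hi0 : i 0 = 1) (hik : i k = n) (hε0 : ε 0 = 0)
    (hchain : ∀ α, 1 ≤ α → α < k → i (α - 1) + ε α < i α)
    (hlast : i (k - 1) < i k)
    (hε : ∃ α, 1 ≤ α ∧ α < k ∧ 1 < ε α) :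
    2 * n - 2 < (Mset k i ε).card := by
  obtain ⟨α, -, hαk, hεα⟩ := hε
  have hsum : ε α ≤ ∑ β ∈ range k, ε β := single_le_sum (by simp) (mem_range.2 hαk)
  have := two_mul_add_sum_le_card_Mset hε0 hchain hlast
  omega

/-- Staircase dimension count, strict case: for a staircase pattern
`1 = i_0 < i_1 − ε_1 ≤ i_1 < ⋯ < i_{k−1} − ε_{k−1} ≤ i_{k−1} < i_k = n` with `ε_0 = 0`,
if `ε_α > 1` for some `α` with `1 ≤ α < k`, then `#M(I,ε) > 2n − 2`. -/
theorem staircase_card_gt (n k : ℕ) (i ε : ℕ → ℕ) (hk : 1 ≤ k)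
    (hi0 : i 0 = 1) (hik : i k = n) (hε0 : ε 0 = 0)
    (hchain : ∀ α, 1 ≤ α → α < k → i (α - 1) + ε α < i α)
    (hlast : i (k - 1) < i k)
    (hε : ∃ α, 1 ≤ α ∧ α < k ∧ 1 < ε α) :
    2 * n - 2 < (Mset k i ε).card :=
  staircase_card_gt_general n k i ε hi0 hik hε0 hchain hlast hε
end

section
/- Orthogonality of residual vectors: Let b be an invertible upper triangular n×n matrix over a field, and for indices 1 ≤ j < i ≤ n let Π_m denote the diagonal projection onto coordinates 1..m. Define u = (Π_i − Π_{j−1})·(b·e_i) and vᵀ = (e_jᵀ·b⁻¹)·(Π_i − Π_{j−1}). Then vᵀ·u = 0, and moreover (b·E_{ij}·b⁻¹) restricted to the lower-triangular-plus-diagonal part equals the corresponding part of u·vᵀ, i.e. (b E_{ij} b⁻¹)_{≤0} = (u vᵀ)_{≤0}. -/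
/-!
Write `b E_{ij} b⁻¹ = x yᵀ` with `x = b e_i` and `yᵀ = e_jᵀ b⁻¹`. Upper triangularity makes `x`
vanish below coordinate `i` and `y` vanish above coordinate `j`, so every product `x_p y_q` with
`q ≤ p` that is nonzero has `j ≤ q ≤ p ≤ i` and is untouched by the projection onto coordinates
`j..i`. Taking `p = q` gives `vᵀu = yᵀx = (b⁻¹ b)_{ji} = 0`.
-/

namespace Matrix

variable {ι R : Type*} [Fintype ι] [DecidableEq ι]

section MatrixUnit

variable [CommSemiring R]

theorem mul_single_one_mul (b c : Matrix ι ι R) (i j : ι) :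
    b * single i j 1 * c = vecMulVec (b *ᵥ Pi.single i 1) (Pi.single j 1 ᵥ* c) := by
  rw [single_eq_single_vecMulVec_single, mul_vecMulVec, vecMulVec_mul]

theorem single_one_vecMul_dotProduct_mulVec_single_one (b c : Matrix ι ι R) (i j : ι) :
    (Pi.single j 1 ᵥ* c) ⬝ᵥ (b *ᵥ Pi.single i 1) = (c * b) j i := by
  rw [← dotProduct_mulVec, mulVec_mulVec, mulVec_single_one, single_dotProduct, one_mul]
  rfl

end MatrixUnit

section BlockTriangular

variable [LT ι] [NonAssocSemiring R] {b : Matrix ι ι R}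

theorem BlockTriangular.mulVec_single_one_eq_zero (hb : b.BlockTriangular id) {i s : ι}
    (h : i < s) : (b *ᵥ Pi.single i 1) s = 0 := by
  simpa using hb h

theorem BlockTriangular.single_one_vecMul_eq_zero (hb : b.BlockTriangular id) {j t : ι}
    (h : t < j) : (Pi.single j 1 ᵥ* b) t = 0 := by
  simpa using hb h

end BlockTriangular

section IntervalProjection

variable [LinearOrder ι]

/-- The paper's `Π_i − Π_{j−1}`. -/
def intervalProjection [Zero R] [One R] (j i : ι) : Matrix ι ι R :=
  diagonal fun s => if j ≤ s ∧ s ≤ i then 1 else 0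

variable [CommSemiring R] {x y : ι → R} {i j : ι}

theorem intervalProjection_mulVec_apply_mul_vecMul_apply (hx : ∀ s, i < s → x s = 0)
    (hy : ∀ t, t < j → y t = 0) {p q : ι} (hqp : q ≤ p) :
    (intervalProjection j i *ᵥ x) p * (y ᵥ* intervalProjection j i) q = x p * y q := by
  rw [intervalProjection, mulVec_diagonal, vecMul_diagonal]
  by_cases hwin : j ≤ q ∧ p ≤ i
  · simp [hwin.1, hwin.2, hwin.1.trans hqp, hqp.trans hwin.2]
  · have hzero : x p * y q = 0 := by
      rcases not_and_or.mp hwin with hq | hp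
      · rw [hy q (not_le.mp hq), mul_zero]
      · rw [hx p (not_le.mp hp), zero_mul]
    calc _ = (if j ≤ p ∧ p ≤ i then 1 else 0) * (if j ≤ q ∧ q ≤ i then 1 else 0) * (x p * y q) :=
          by ring
      _ = x p * y q := by rw [hzero, mul_zero]

theorem vecMul_intervalProjection_dotProduct_mulVec (hx : ∀ s, i < s → x s = 0)
    (hy : ∀ t, t < j → y t = 0) :
    (y ᵥ* intervalProjection j i) ⬝ᵥ (intervalProjection j i *ᵥ x) = y ⬝ᵥ x := by
  refine Finset.sum_congr rfl fun t _ => ?_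
  rw [mul_comm, intervalProjection_mulVec_apply_mul_vecMul_apply hx hy le_rfl, mul_comm]

theorem vecMulVec_intervalProjection_apply (hx : ∀ s, i < s → x s = 0)
    (hy : ∀ t, t < j → y t = 0) {p q : ι} (hqp : q ≤ p) :
    vecMulVec (intervalProjection j i *ᵥ x) (y ᵥ* intervalProjection j i) p q =
      vecMulVec x y p q :=
  intervalProjection_mulVec_apply_mul_vecMul_apply hx hy hqp

end IntervalProjection

end Matrix

open Matrix in
/-- Rank-one parametrization of co-adjoint orbits: let `b` be an invertible upper
triangular matrix, `j < i`, `P = Π_i − Π_{j−1}` the projection onto coordinates `j..i`,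
`u = P·(b·e_i)` and `vᵀ = (e_jᵀ·b⁻¹)·P`. Then `vᵀ·u = 0` and the
lower-triangular-plus-diagonal part of `b·E_{ij}·b⁻¹` equals that of `u·vᵀ`. -/
theorem rank_one_orbit_param {F : Type*} [Field F] {n : ℕ}
    (b : Matrix (Fin n) (Fin n) F) (hb : b.BlockTriangular id)
    (hdet : IsUnit b.det) (i j : Fin n) (hij : j < i) :
    let P : Matrix (Fin n) (Fin n) F :=
      Matrix.diagonal fun s => if j ≤ s ∧ s ≤ i then 1 else 0
    let u : Fin n → F := P.mulVec (b.mulVec (Pi.single i 1))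
    let v : Fin n → F := Matrix.vecMul (Matrix.vecMul (Pi.single j 1) b⁻¹) P
    dotProduct v u = 0 ∧
      ∀ p q : Fin n, q ≤ p →
        ((b * Matrix.single i j (1 : F) * b⁻¹ : Matrix (Fin n) (Fin n) F)) p q =
          Matrix.vecMulVec u v p q := by
  intro P u v
  have : Invertible b := b.invertibleOfIsUnitDet hdet
  have hx : ∀ s, i < s → (b *ᵥ Pi.single i 1) s = 0 := fun _ => hb.mulVec_single_one_eq_zero
  have hy : ∀ t, t < j → (Pi.single j 1 ᵥ* b⁻¹) t = 0 := fun _ =>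
    (blockTriangular_inv_of_blockTriangular hb).single_one_vecMul_eq_zero
  refine ⟨?_, fun p q hqp => ?_⟩
  · calc v ⬝ᵥ u = (Pi.single j 1 ᵥ* b⁻¹) ⬝ᵥ (b *ᵥ Pi.single i 1) :=
          vecMul_intervalProjection_dotProduct_mulVec hx hy
      _ = 0 := by
        rw [single_one_vecMul_dotProduct_mulVec_single_one, nonsing_inv_mul b hdet,
          one_apply_ne hij.ne]
  · rw [mul_single_one_mul]
    exact (vecMulVec_intervalProjection_apply hx hy hqp).symm
end
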